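/- arXiv:1904.13176 — 3 statements merged into one kernel-verified Lean document; each statement's English description precedes it below -/
import Mathlib

section
/- Let $c$ and $\eta$ be positive reals with $\eta \geq 1$, let $x \in (0,1)$, and assume $c > 3/2$ or $\eta > \sqrt{x}$. Then, with $X := (x+\eta)/(1+\eta)$, the double series identity $\sum_{k\geq 0} \left(\frac{1-x}{1+\eta}\right)^k {}_2F_1\!\left(\frac{k+1}{2}, \frac{k}{2}+1; c; x\right) = \frac{1}{X}\, {}_2F_1\!\left(\frac{1}{2}, 1; c; \frac{x}{X^2}\right)$ holds, where all series involved converge absolutely. -/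
open Real

noncomputable def poch (a : ℝ) (n : ℕ) : ℝ := (ascPochhammer ℝ n).eval a

/-- The Gauss hypergeometric series `₂F₁(a,b;c;x)`. -/
noncomputable def hyp2F1 (a b c x : ℝ) : ℝ :=
  ∑' n : ℕ, poch a n * poch b n / (poch c n * (n.factorial : ℝ)) * x ^ n

/-!
Put `t = (1 - x) / (1 + η)`, so that `X = 1 - t`. The duplication formula for Pochhammer symbols
gives `((k+1)/2)ₙ (k/2+1)ₙ = (1/2)ₙ n! C(k+2n, 2n)`, so summing the double series over `k` first,
the negative binomial series `∑ₖ C(k+2n, 2n) tᵏ = X^(-(2n+1))` leaves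
`X⁻¹ ∑ₙ (1/2)ₙ / (c)ₙ (x/X²)ⁿ = X⁻¹ ₂F₁(1/2, 1; c; x/X²)`.
All terms are nonnegative, so the two orders of summation agree.
-/

lemma poch_succ (a : ℝ) (n : ℕ) : poch a (n + 1) = poch a n * (a + n) :=
  ascPochhammer_succ_eval n a

lemma poch_pos {a : ℝ} (ha : 0 < a) (n : ℕ) : 0 < poch a n :=
  ascPochhammer_pos n a ha

lemma poch_natCast_add_one (m k : ℕ) :
    poch ((m : ℝ) + 1) k = (k.factorial : ℝ) * ((m + k).choose k : ℕ) := by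
  rw [poch, ← Nat.cast_add_one, ascPochhammer_nat_eq_natCast_ascFactorial,
    Nat.ascFactorial_eq_factorial_mul_choose, Nat.cast_mul]

lemma poch_mul_poch_add_half_mul_four_pow (a : ℝ) (n : ℕ) :
    poch a n * poch (a + 1 / 2) n * 4 ^ n = poch (2 * a) (2 * n) := by
  induction n with
  | zero => simp [poch]
  | succ n ih =>
    rw [show 2 * (n + 1) = 2 * n + 1 + 1 by ring, poch_succ, poch_succ, poch_succ, poch_succ,
      pow_succ]
    push_cast
    linear_combination (4 * (a + n) * (a + 1 / 2 + n)) * ih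

lemma poch_mul_poch_eq_choose (k n : ℕ) :
    poch (((k : ℝ) + 1) / 2) n * poch ((k : ℝ) / 2 + 1) n =
      poch (1 / 2) n * (n.factorial : ℝ) * ((k + 2 * n).choose (2 * n) : ℕ) := by
  have hk := poch_mul_poch_add_half_mul_four_pow (((k : ℝ) + 1) / 2) n
  have h0 := poch_mul_poch_add_half_mul_four_pow (1 / 2) n
  rw [show ((k : ℝ) + 1) / 2 + 1 / 2 = k / 2 + 1 by ring,
    show 2 * (((k : ℝ) + 1) / 2) = k + 1 by ring, poch_natCast_add_one] at hk
  rw [show (1 : ℝ) / 2 + 1 / 2 = (0 : ℕ) + 1 by norm_num,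
    show 2 * ((1 : ℝ) / 2) = (0 : ℕ) + 1 by norm_num,
    poch_natCast_add_one, poch_natCast_add_one] at h0
  simp only [zero_add, Nat.choose_self, Nat.cast_one, mul_one] at h0
  apply mul_right_cancel₀ (pow_ne_zero n (four_ne_zero (α := ℝ)))
  linear_combination hk - ((k + 2 * n).choose (2 * n) : ℕ) * h0

lemma summable_hyp2F1_series {a b c x : ℝ}
    (habc : ∀ k : ℕ, (k : ℝ) ≠ -a ∧ (k : ℝ) ≠ -b ∧ (k : ℝ) ≠ -c) (hx : |x| < 1) :
    Summable fun n : ℕ => poch a n * poch b n / (poch c n * (n.factorial : ℝ)) * x ^ n := by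
  have hx' : x ∈ Metric.eball (0 : ℝ) (ordinaryHypergeometricSeries ℝ a b c).radius := by
    rw [ordinaryHypergeometricSeries_radius_eq_one ℝ a b c habc, mem_eball_zero_iff,
      Real.enorm_eq_ofReal_abs]
    exact ENNReal.ofReal_lt_one.2 hx
  refine ((ordinaryHypergeometricSeries ℝ a b c).summable_norm_apply hx').of_norm.congr fun n => ?_
  rw [ordinaryHypergeometricSeries_apply_eq, smul_eq_mul, poch, poch, poch, div_eq_mul_inv,
    mul_inv]
  ring

lemma hasSum_tsum_of_hasSum_swap_of_nonneg {α β : Type*} {f : α → β → ℝ}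
    (hf : ∀ a b, 0 ≤ f a b) {g : β → ℝ} (hg : ∀ b, HasSum (fun a => f a b) (g b)) {s : ℝ}
    (hs : HasSum g s) : HasSum (fun a => ∑' b, f a b) s := by
  have hsum : Summable fun p : β × α => f p.2 p.1 :=
    (summable_prod_of_nonneg fun p => hf p.2 p.1).2
      ⟨fun b => (hg b).summable, by simpa only [(hg _).tsum_eq] using hs.summable⟩
  have htot : HasSum (fun p : β × α => f p.2 p.1) s :=
    (hsum.hasSum.prod_fiberwise hg).unique hs ▸ hsum.hasSum
  have htot' : HasSum (fun p : α × β => f p.1 p.2) s :=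
    (Equiv.prodComm α β).hasSum_iff.2 htot
  exact htot'.prod_fiberwise fun a => (htot'.summable.prod_factor a).hasSum

lemma natCast_ne_neg_of_pos {a : ℝ} (ha : 0 < a) (k : ℕ) : (k : ℝ) ≠ -a :=
  ne_of_gt (by linarith [k.cast_nonneg (α := ℝ)])

lemma hasSum_pow_mul_hyp2F1_term (c x : ℝ) (n : ℕ) {t : ℝ} (ht : |t| < 1) :
    HasSum (fun k : ℕ => t ^ k * (poch (((k : ℝ) + 1) / 2) n * poch ((k : ℝ) / 2 + 1) n /
        (poch c n * (n.factorial : ℝ)) * x ^ n))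
      (poch (1 / 2) n / poch c n * x ^ n / (1 - t) ^ (2 * n + 1)) := by
  have h := (hasSum_choose_mul_geometric_of_norm_lt_one (2 * n)
    (by rwa [Real.norm_eq_abs])).mul_left (poch (1 / 2) n / poch c n * x ^ n)
  rw [div_eq_mul_one_div _ ((1 - t) ^ (2 * n + 1))]
  refine h.congr_fun fun k => ?_
  rw [poch_mul_poch_eq_choose, mul_right_comm (poch (1 / 2) n),
    mul_div_mul_right _ _ (Nat.cast_ne_zero.2 n.factorial_ne_zero)]
  ring

lemma hasSum_hyp2F1_half_one_div_sq {c x X : ℝ} (hc : ∀ k : ℕ, (k : ℝ) ≠ -c) (hX : X ≠ 0)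
    (hx : |x / X ^ 2| < 1) :
    HasSum (fun n : ℕ => poch (1 / 2) n / poch c n * x ^ n / X ^ (2 * n + 1))
      (X⁻¹ * hyp2F1 (1 / 2) 1 c (x / X ^ 2)) := by
  have habc (k : ℕ) : (k : ℝ) ≠ -(1 / 2) ∧ (k : ℝ) ≠ -1 ∧ (k : ℝ) ≠ -c :=
    ⟨natCast_ne_neg_of_pos one_half_pos k, natCast_ne_neg_of_pos one_pos k, hc k⟩
  refine ((summable_hyp2F1_series habc hx).hasSum.mul_left X⁻¹).congr_fun fun n => ?_
  rw [show poch 1 n = n.factorial from ascPochhammer_eval_one ℝ n,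
    mul_div_mul_right _ _ (Nat.cast_ne_zero.2 n.factorial_ne_zero),
    div_pow, ← pow_mul, pow_succ]
  field_simp

theorem weighted_hyp_sum_general (c η x : ℝ) (hc : 0 < c) (hη : 1 ≤ η) (hx0 : 0 < x) (hx1 : x < 1) :
    (∀ k : ℕ, Summable fun n : ℕ =>
        poch (((k : ℝ) + 1) / 2) n * poch ((k : ℝ) / 2 + 1) n /
          (poch c n * (n.factorial : ℝ)) * x ^ n) ∧
    (Summable fun k : ℕ =>
        ((1 - x) / (1 + η)) ^ k * hyp2F1 (((k : ℝ) + 1) / 2) ((k : ℝ) / 2 + 1) c x) ∧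
    (∑' k : ℕ, ((1 - x) / (1 + η)) ^ k * hyp2F1 (((k : ℝ) + 1) / 2) ((k : ℝ) / 2 + 1) c x) =
      (1 + η) / (x + η) * hyp2F1 (1 / 2) 1 c (x / ((x + η) / (1 + η)) ^ 2) := by
  set t := (1 - x) / (1 + η)
  have ht0 : 0 < t := div_pos (by linarith) (by linarith)
  have ht1 : t < 1 := (div_lt_one (by linarith)).2 (by linarith)
  have hX : (x + η) / (1 + η) = 1 - t := by simp only [t]; field_simp; ring
  have hy : |x / (1 - t) ^ 2| < 1 := by
    rw [abs_of_pos (by positivity), div_lt_one (by nlinarith), ← hX, div_pow,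
      lt_div_iff₀ (by positivity)]
    nlinarith [mul_pos (sub_pos.2 hx1) (show 0 < η ^ 2 - x by nlinarith)]
  have hterm_nonneg (k n : ℕ) : 0 ≤ t ^ k * (poch (((k : ℝ) + 1) / 2) n *
      poch ((k : ℝ) / 2 + 1) n / (poch c n * (n.factorial : ℝ)) * x ^ n) := by
    have := poch_pos (a := ((k : ℝ) + 1) / 2) (by positivity) n
    have := poch_pos (a := (k : ℝ) / 2 + 1) (by positivity) n
    have := poch_pos hc n
    positivity
  have hsum := hasSum_tsum_of_hasSum_swap_of_nonneg hterm_nonneg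
    (fun n => hasSum_pow_mul_hyp2F1_term c x n (abs_lt.2 ⟨by linarith, ht1⟩))
    (hasSum_hyp2F1_half_one_div_sq (natCast_ne_neg_of_pos hc) (by linarith) hy)
  have hrow (k : ℕ) : t ^ k * hyp2F1 (((k : ℝ) + 1) / 2) ((k : ℝ) / 2 + 1) c x =
      ∑' n, t ^ k * (poch (((k : ℝ) + 1) / 2) n * poch ((k : ℝ) / 2 + 1) n /
        (poch c n * (n.factorial : ℝ)) * x ^ n) := tsum_mul_left.symm
  refine ⟨fun k => summable_hyp2F1_series (fun j => ⟨natCast_ne_neg_of_pos (by positivity) j,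
    natCast_ne_neg_of_pos (by positivity) j, natCast_ne_neg_of_pos hc j⟩)
    (abs_lt.2 ⟨by linarith, hx1⟩), ?_, ?_⟩
  · simpa only [hrow] using hsum.summable
  · rw [← inv_div, hX, tsum_congr hrow, hsum.tsum_eq]

/-- Theorem 1 of the paper on `(0,1)`: the weighted sum of hypergeometric functions
`S(η,c;x)` evaluates to `(1/X) ₂F₁(1/2,1;c;x/X²)` with `X = (x+η)/(1+η)`. -/
theorem weighted_hyp_sum (c η x : ℝ) (hc : 0 < c) (hη : 1 ≤ η) (hx0 : 0 < x) (hx1 : x < 1)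
    (hconv : 3 / 2 < c ∨ Real.sqrt x < η) :
    (∀ k : ℕ, Summable fun n : ℕ =>
        poch (((k : ℝ) + 1) / 2) n * poch ((k : ℝ) / 2 + 1) n /
          (poch c n * (n.factorial : ℝ)) * x ^ n) ∧
    (Summable fun k : ℕ =>
        ((1 - x) / (1 + η)) ^ k * hyp2F1 (((k : ℝ) + 1) / 2) ((k : ℝ) / 2 + 1) c x) ∧
    (∑' k : ℕ, ((1 - x) / (1 + η)) ^ k * hyp2F1 (((k : ℝ) + 1) / 2) ((k : ℝ) / 2 + 1) c x) =
      (1 + η) / (x + η) * hyp2F1 (1 / 2) 1 c (x / ((x + η) / (1 + η)) ^ 2) :=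
  weighted_hyp_sum_general c η x hc hη hx0 hx1
end

section
/- Let $0 < \eta < 1$ and $c > 3/2$. Then $\sum_{k\geq 0} (1-\eta)^k\, {}_2F_1\!\left(\frac{k+1}{2}, \frac{k}{2}+1; c; \eta^2\right) = \frac{2c-2}{2c-3}\cdot\frac{1}{\eta}$. -/
open Real

lemma poch_zero (a : ℝ) : poch a 0 = 1 := by simp [poch]

lemma poch_succ_left (a : ℝ) (n : ℕ) : poch a (n + 1) = a * poch (a + 1) n := by
  simp only [poch, ascPochhammer_succ_left, Polynomial.eval_mul, Polynomial.eval_X,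
    Polynomial.eval_comp, Polynomial.eval_add, Polynomial.eval_one]

lemma poch_dup (a : ℝ) : ∀ n : ℕ, poch a n * poch (a + 1/2) n * 4 ^ n = poch (2*a) (2*n)
  | 0 => by simp [poch_zero]
  | n + 1 => by
    have h2 : 2 * (n + 1) = (2*n + 1) + 1 := by ring
    rw [h2, poch_succ, poch_succ, poch_succ, poch_succ, ← poch_dup a n]
    push_cast
    ring

lemma poch_one_eq (n : ℕ) : poch 1 n = (n.factorial : ℝ) := by
  rw [poch]; exact_mod_cast ascPochhammer_eval_one ℝ n

lemma poch_nat_succ (k m : ℕ) : poch ((k : ℝ) + 1) m = ((k + m).choose m : ℝ) * m.factorial := by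
  have h1 : (k.factorial : ℝ) * poch ((k : ℝ) + 1) m = ((k + m).factorial : ℝ) := by
    simpa [poch] using factorial_mul_ascPochhammer ℝ k m
  have h2 : ((k + m).choose m) * k.factorial * m.factorial = (k + m).factorial :=
    Nat.add_choose_mul_factorial_mul_factorial k m
  have hk : (k.factorial : ℝ) ≠ 0 := Nat.cast_ne_zero.mpr k.factorial_ne_zero
  have : poch ((k : ℝ) + 1) m = ((k + m).factorial : ℝ) / (k.factorial : ℝ) := by
    field_simp [← h1]
    linarith [h1]
  rw [this, ← h2]
  push_cast
  field_simp
lemma alg1 (c p q m : ℝ) (hq : q ≠ 0) (hd : c - 1 + m ≠ 0) (h4 : c - 1 ≠ 0) (h5 : c - 3/2 ≠ 0) :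
    (c-1)/(c-3/2) * (p/q) - (c-1)/(c-3/2) * (p*(1/2+m)/(q*(c-1+m))) = p/(q*(c-1+m)/(c-1)) := by
  rw [div_div_eq_mul_div, div_mul_div_comm, div_mul_div_comm,
    div_sub_div _ _ (mul_ne_zero h5 hq) (mul_ne_zero h5 (mul_ne_zero hq hd)),
    div_eq_div_iff (by exact mul_ne_zero (mul_ne_zero h5 hq) (mul_ne_zero h5 (mul_ne_zero hq hd)))
      (mul_ne_zero hq hd)]
  ring

lemma alg2 (c p q m : ℝ) (hq : q ≠ 0) (hd : c - 1 + m ≠ 0) (h4 : c - 1 ≠ 0) (h5 : c - 3/2 ≠ 0) :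
    p/(q*(c-1+m)/(c-1)) = ((c-1)/(c-3/2) * (p/q)) * (c - 3/2)/(c-1+m) := by
  rw [div_div_eq_mul_div, div_mul_div_comm, div_mul_eq_mul_div, div_div,
    div_eq_div_iff (mul_ne_zero hq hd) (by exact mul_ne_zero (mul_ne_zero h5 hq) hd)]
  ring

lemma gauss_sum {c : ℝ} (hc : 3/2 < c) :
    HasSum (fun n : ℕ => poch (1/2) n / poch c n) ((c - 1) / (c - 3/2)) := by
  have hc32 : (0:ℝ) < c - 3/2 := by linarith
  have hc1 : (0:ℝ) < c - 1 := by linarith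
  set A : ℝ := (c - 1) / (c - 3/2) with hA
  set t : ℕ → ℝ := fun n => A * (poch (1/2) n / poch (c - 1) n) with ht
  have hpochc1 : ∀ n, 0 < poch (c-1) n := fun n => poch_pos hc1 n
  have hpochc : ∀ n, 0 < poch c n := fun n => poch_pos (by linarith) n
  have hpochh : ∀ n, 0 < poch ((1:ℝ)/2) n := fun n => poch_pos (by norm_num) n
  have hcn : ∀ n : ℕ, (0:ℝ) < c - 1 + n := fun n =>
    lt_of_lt_of_le hc1 (le_add_of_nonneg_right (Nat.cast_nonneg n))
  have hrel : ∀ n : ℕ, poch c n = poch (c-1) n * (c - 1 + n) / (c - 1) := by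
    intro n
    have h1 : poch (c-1) (n+1) = (c-1) * poch c n := by
      have := poch_succ_left (c-1) n
      rwa [show c - 1 + 1 = c by ring] at this
    have h2 : poch (c-1) (n+1) = poch (c-1) n * (c - 1 + n) := poch_succ _ _
    rw [← h2, h1]
    field_simp
  set a : ℕ → ℝ := fun n => poch (1/2) n / poch c n with ha
  have hapos : ∀ n, 0 < a n := fun n => div_pos (hpochh n) (hpochc n)
  have key : ∀ n : ℕ, t n - t (n+1) = a n := by
    intro n
    have hq := (hpochc1 n).ne'
    have hd := (hcn n).ne'
    have h4 : c - 1 ≠ 0 := ne_of_gt hc1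
    have h5 : c - (3:ℝ)/2 ≠ 0 := ne_of_gt hc32
    simp only [ht, ha, hA, poch_succ, hrel n]
    exact alg1 c _ _ _ hq hd h4 h5
  have htpos : ∀ n, 0 < t n := fun n =>
    mul_pos (div_pos hc1 hc32) (div_pos (hpochh n) (hpochc1 n))
  have hsum_range : ∀ n : ℕ, ∑ i ∈ Finset.range n, a i = t 0 - t n := by
    intro n
    rw [← Finset.sum_range_sub' t n]
    exact Finset.sum_congr rfl fun i _ => (key i).symm
  have hsummable : Summable a := by
    apply summable_of_sum_range_le (c := t 0) (fun n => (hapos n).le)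
    intro n
    rw [hsum_range]
    linarith [htpos n]
  have htend : Filter.Tendsto t Filter.atTop (nhds (t 0 - ∑' n, a n)) := by
    have h1 := hsummable.hasSum.tendsto_sum_nat
    have h2 : Filter.Tendsto (fun n => t 0 - ∑ i ∈ Finset.range n, a i)
        Filter.atTop (nhds (t 0 - ∑' n, a n)) := tendsto_const_nhds.sub h1
    refine h2.congr fun n => ?_
    rw [hsum_range]; ring
  set L : ℝ := t 0 - ∑' n, a n with hL
  have hanti : Antitone t :=
    antitone_nat_of_succ_le fun n => by linarith [key n, (hapos n).le]
  have htL : ∀ n, L ≤ t n := fun n => hanti.le_of_tendsto htend n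
  have hL0 : L = 0 := by
    by_contra hne
    have hLpos : 0 < L :=
      lt_of_le_of_ne (ge_of_tendsto' htend fun n => (htpos n).le) (Ne.symm hne)
    have hge : ∀ n : ℕ, L * (c - 3/2) / (c - 1 + n) ≤ a n := by
      intro n
      have h1 : a n = t n * (c - 3/2) / (c - 1 + n) := by
        have hq := (hpochc1 n).ne'
        have hd := (hcn n).ne'
        have h4 : c - 1 ≠ 0 := ne_of_gt hc1
        have h5 : c - (3:ℝ)/2 ≠ 0 := ne_of_gt hc32
        simp only [ht, ha, hA, hrel n]
        exact alg2 c _ _ _ hq hd h4 h5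
      rw [h1]
      gcongr
      all_goals linarith [htL n, hcn n]
    have hs2 : Summable (fun n : ℕ => L * (c - 3/2) / (c - 1 + n)) :=
      hsummable.of_nonneg_of_le (fun n => by positivity) hge
    have hM : (0:ℝ) < L * (c - 3/2) := by positivity
    have hs4 : Summable (fun n : ℕ => 1 / ((n : ℝ) + 1)) := by
      apply (hs2.mul_left (c / (L * (c - 3/2)))).of_nonneg_of_le (fun n => by positivity)
      intro n
      have hd := hcn n
      have heq : c / (L * (c - 3/2)) * (L * (c - 3/2) / (c - 1 + n)) = c / (c - 1 + n) := by
        rw [div_mul_div_comm, mul_comm c (L * (c - 3/2)), mul_div_mul_left _ _ hM.ne']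
      rw [heq, div_le_div_iff₀ (by positivity) hd]
      nlinarith [mul_nonneg (show (0:ℝ) ≤ c - 1 by linarith) (Nat.cast_nonneg (α := ℝ) n)]
    have hs5 : Summable (fun n : ℕ => 1 / ((n : ℝ))) := by
      apply (summable_nat_add_iff 1).mp
      refine hs4.congr fun n => ?_
      push_cast
      ring
    exact Real.not_summable_one_div_natCast hs5
  have hfin : ∑' n, a n = A := by
    have h := hL0
    rw [hL] at h
    have ht0 : t 0 = A := by simp [ht, poch_zero]
    linarith
  exact hfin ▸ hsummable.hasSum

lemma inner_hasSum {η : ℝ} (hη0 : 0 < η) (hη1 : η < 1) (n : ℕ) :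
    HasSum (fun k : ℕ => (1 - η) ^ k * poch ((k : ℝ) + 1) (2*n))
      (((2*n).factorial : ℝ) / η ^ (2*n+1)) := by
  have hr : ‖1 - η‖ < 1 := by rw [Real.norm_eq_abs, abs_lt]; constructor <;> linarith
  have h2 := (hasSum_choose_mul_geometric_of_norm_lt_one (2*n) hr).mul_left
    (((2*n).factorial : ℝ))
  have hval : ((2*n).factorial : ℝ) * (1 / (1 - (1-η)) ^ (2*n+1))
      = ((2*n).factorial : ℝ) / η ^ (2*n+1) := by
    rw [show (1:ℝ) - (1-η) = η by ring]; ring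
  rw [hval] at h2
  convert h2 using 1
  rfl
  funext k
  rw [poch_nat_succ k (2*n)]
  push_cast
  ring

/-- `S(η,c;η²) = (2c-2)/((2c-3)η)` for `0 < η < 1`, `c > 3/2`. -/
theorem S_eta_sq (η c : ℝ) (hη0 : 0 < η) (hη1 : η < 1) (hc : 3 / 2 < c) :
    (∑' k : ℕ, (1 - η) ^ k * hyp2F1 (((k : ℝ) + 1) / 2) ((k : ℝ) / 2 + 1) c (η ^ 2)) =
      (2 * c - 2) / (2 * c - 3) * (1 / η) := by
  have hc32 : (0:ℝ) < c - 3/2 := by linarith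
  have hη : η ≠ 0 := hη0.ne'
  have hpochc : ∀ n, 0 < poch c n := fun n => poch_pos (by linarith) n
  have h1η : 0 < 1 - η := by linarith
  set f : ℕ → ℕ → ℝ := fun n k =>
    (1 - η) ^ k * (poch ((k : ℝ) + 1) (2*n) / (4 ^ n * poch c n * (n.factorial : ℝ))
      * η ^ (2*n)) with hf
  have hfnonneg : ∀ n k, 0 ≤ f n k := by
    intro n k
    have h1 := (poch_pos (show (0:ℝ) < (k:ℝ)+1 by positivity) (2*n)).le
    have h2 := (hpochc n).le
    have h3 : (0:ℝ) < (n.factorial : ℝ) := by exact_mod_cast n.factorial_pos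
    simp only [hf]
    positivity
  have hstepA : ∀ k : ℕ, (1 - η) ^ k * hyp2F1 (((k : ℝ) + 1) / 2) ((k : ℝ) / 2 + 1) c (η ^ 2)
      = ∑' n, f n k := by
    intro k
    rw [hyp2F1, ← tsum_mul_left]
    refine tsum_congr fun n => ?_
    have hdup := poch_dup (((k:ℝ)+1)/2) n
    rw [show ((k:ℝ)+1)/2 + 1/2 = (k:ℝ)/2 + 1 by ring,
      show 2 * (((k:ℝ)+1)/2) = (k:ℝ)+1 by ring] at hdup
    have e3 : (η^2)^n = η^(2*n) := by rw [← pow_mul]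
    have h4 : ((4:ℝ))^n ≠ 0 := by positivity
    have hfact : ((n.factorial : ℝ)) ≠ 0 := by
      exact_mod_cast n.factorial_ne_zero
    simp only [hf]
    rw [e3, ← hdup]
    have hP := (hpochc n).ne'
    field_simp
  have hinner : ∀ n : ℕ, HasSum (fun k => f n k)
      ((1/η) * (poch (1/2) n / poch c n)) := by
    intro n
    have h := (inner_hasSum hη0 hη1 n).mul_left
      (η^(2*n) / (4^n * poch c n * (n.factorial : ℝ)))
    have hfactn : ((n.factorial : ℝ)) ≠ 0 := by exact_mod_cast n.factorial_ne_zero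
    have h4 : ((4:ℝ))^n ≠ 0 := by positivity
    have hP := (hpochc n).ne'
    have hfac : ((2*n).factorial : ℝ) = poch (1/2) n * (n.factorial : ℝ) * 4^n := by
      have hd := poch_dup (1/2) n
      rw [show (1:ℝ)/2 + 1/2 = 1 by norm_num, show 2*((1:ℝ)/2) = 1 by norm_num,
        poch_one_eq, poch_one_eq] at hd
      exact hd.symm
    have hval : η^(2*n) / (4^n * poch c n * (n.factorial : ℝ))
        * (((2*n).factorial : ℝ) / η^(2*n+1)) = (1/η) * (poch (1/2) n / poch c n) := by
      rw [hfac, pow_succ]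
      have hpow : η^(2*n) ≠ 0 := pow_ne_zero _ hη
      field_simp
    rw [hval] at h
    convert h using 1
    rfl
    funext k
    simp only [hf]
    ring
  have houter : Summable (fun n => ∑' k, f n k) := by
    have h := (gauss_sum hc).summable.mul_left (1/η)
    exact h.congr fun n => ((hinner n).tsum_eq).symm
  have hUncurry : Summable (Function.uncurry fun n k => f n k) :=
    (summable_prod_of_nonneg (fun p => hfnonneg p.1 p.2)).mpr
      ⟨fun n => (hinner n).summable, houter⟩
  have hswap : Summable (fun p : ℕ × ℕ => f p.2 p.1) := by
    have := ((Equiv.prodComm ℕ ℕ).summable_iff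
      (f := Function.uncurry fun n k => f n k)).mpr hUncurry
    exact this
  calc (∑' k : ℕ, (1 - η) ^ k * hyp2F1 (((k : ℝ) + 1) / 2) ((k : ℝ) / 2 + 1) c (η ^ 2))
      = ∑' k, ∑' n, f n k := tsum_congr hstepA
    _ = ∑' n, ∑' k, f n k :=
        Summable.tsum_comm' hUncurry (fun n => (hinner n).summable) (fun k => hswap.prod_factor k)
    _ = ∑' n, (1/η) * (poch (1/2) n / poch c n) := tsum_congr fun n => (hinner n).tsum_eq
    _ = (1/η) * ((c-1)/(c-3/2)) := by rw [tsum_mul_left, (gauss_sum hc).tsum_eq]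
    _ = (2 * c - 2) / (2 * c - 3) * (1 / η) := by
        rw [mul_comm]
        congr 1
        rw [div_eq_div_iff (by linarith : (c - 3/2 : ℝ) ≠ 0) (by linarith : (2*c - 3 : ℝ) ≠ 0)]
        ring
end

section
/- Let $\lambda \in (0,1)$ and let $z$ be a real number with $0 \leq z \leq z_-$ where $z_- := 2/(1+\sqrt{1-\lambda^2})$. Define $H(z) := \frac{z}{1-\lambda^2}\left(1 - \frac{\lambda^2 z}{2} - \frac{\lambda}{2}\sqrt{\lambda^2 z^2 - 4z + 4}\right)$ and $Q := 1 - \lambda^2$. Then $y := Q\, H(z)$ satisfies the functional equation $y = z\left(1 - \lambda\sqrt{1-y}\right)$, and $\lambda^2 z^2 - 4z + 4 \geq 0$ and $0 \leq y \leq 1$ on this range. -/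
/-!
With `s = √(1 - λ²)` the discriminant factors as `(2 - z(1 + s))(2 - z(1 - s))`, and both
factors are nonnegative for `0 ≤ z ≤ 2/(1 + s)`. Writing `d` for its square root,
`y = z(1 - λ²z/2 - λd/2)` and `1 - y` is the perfect square `((λz + d)/2)²`, so
`√(1 - y) = (λz + d)/2` and the functional equation becomes a ring identity. Finally
`y ≥ 0` amounts to `λd ≤ 2 - λ²z`, which after squaring reduces to `λ² ≤ 1`.
-/

open Real

lemma discriminant_eq_mul {lam s : ℝ} (z : ℝ) (hs : s ^ 2 = 1 - lam ^ 2) :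
    lam ^ 2 * z ^ 2 - 4 * z + 4 = (2 - z * (1 + s)) * (2 - z * (1 - s)) := by
  linear_combination z ^ 2 * hs

lemma discriminant_nonneg {lam z : ℝ} (hl : lam ^ 2 ≤ 1) (hz0 : 0 ≤ z)
    (hz : z ≤ 2 / (1 + √(1 - lam ^ 2))) :
    0 ≤ lam ^ 2 * z ^ 2 - 4 * z + 4 := by
  set s := √(1 - lam ^ 2)
  have hs0 : 0 ≤ s := sqrt_nonneg _
  have hs : s ^ 2 = 1 - lam ^ 2 := sq_sqrt (by linarith)
  have hleft : 0 ≤ 2 - z * (1 + s) := by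
    rw [le_div_iff₀ (by positivity)] at hz
    linarith
  have hright : 0 ≤ 2 - z * (1 - s) := by linarith [mul_nonneg hz0 hs0]
  rw [discriminant_eq_mul z hs]
  exact mul_nonneg hleft hright

lemma one_sub_eq_sq {lam z d : ℝ} (hd : d ^ 2 = lam ^ 2 * z ^ 2 - 4 * z + 4) :
    1 - z * (1 - lam ^ 2 * z / 2 - lam / 2 * d) = ((lam * z + d) / 2) ^ 2 := by
  linear_combination (-1 / 4 : ℝ) * hd

lemma mul_sqrt_discriminant_le {lam z : ℝ} (hl : lam ^ 2 ≤ 1) (hz : lam ^ 2 * z ≤ 2)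
    (hD : 0 ≤ lam ^ 2 * z ^ 2 - 4 * z + 4) :
    lam * √(lam ^ 2 * z ^ 2 - 4 * z + 4) ≤ 2 - lam ^ 2 * z := by
  refine le_of_pow_le_pow_left₀ two_ne_zero (by linarith) ?_
  rw [mul_pow, sq_sqrt hD]
  nlinarith

/-- The closed-form generating function `H` of the total progeny solves the
functional equation `y = z(1 - λ√(1-y))` with `y = Q H(z)`, `Q = 1 - λ²`. -/
theorem progeny_functional_equation (lam z : ℝ) (hl0 : 0 < lam) (hl1 : lam < 1)
    (hz0 : 0 ≤ z) (hz1 : z ≤ 2 / (1 + Real.sqrt (1 - lam ^ 2))) :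
    let H : ℝ := z / (1 - lam ^ 2) *
      (1 - lam ^ 2 * z / 2 - lam / 2 * Real.sqrt (lam ^ 2 * z ^ 2 - 4 * z + 4))
    let Q : ℝ := 1 - lam ^ 2
    let y : ℝ := Q * H
    0 ≤ lam ^ 2 * z ^ 2 - 4 * z + 4 ∧ 0 ≤ y ∧ y ≤ 1 ∧
      y = z * (1 - lam * Real.sqrt (1 - y)) := by
  intro H Q y
  have hlam_sq : lam ^ 2 < 1 := by nlinarith
  have hD := discriminant_nonneg hlam_sq.le hz0 hz1
  set d := √(lam ^ 2 * z ^ 2 - 4 * z + 4)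
  have hy : y = z * (1 - lam ^ 2 * z / 2 - lam / 2 * d) := by
    have hQ : Q ≠ 0 := sub_ne_zero.mpr hlam_sq.ne'
    change Q * (z / Q * _) = _
    rw [← mul_assoc, mul_div_cancel₀ z hQ]
  have hsq : 1 - y = ((lam * z + d) / 2) ^ 2 := hy ▸ one_sub_eq_sq (sq_sqrt hD)
  have hsqrt : √(1 - y) = (lam * z + d) / 2 := by
    rw [hsq, sqrt_sq (by positivity)]
  have hz2 : z ≤ 2 := hz1.trans (div_le_self zero_le_two (by simp [sqrt_nonneg]))
  have hd_le := mul_sqrt_discriminant_le hlam_sq.le (by nlinarith) hD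
  refine ⟨hD, ?_, sub_nonneg.mp (hsq ▸ sq_nonneg _), by rw [hsqrt, hy]; ring⟩
  rw [hy]
  exact mul_nonneg hz0 (by linarith)
end
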